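/- Let π_c be a probability measure on (Ω, 𝒜_c) for each c ∈ C, let q : C → ℝ≥0 with ∑_c q_c = 1, and let Prb^M_q := ∑_c q_c • (map ι_c π_c) be the metaspace probability measure on (Ω^M, 𝒜^M). Then the pushforward of Prb^M_q under the consolidated measurable map (ξ^M, η^M, ζ^M) : Ω^M → Option Bool × Option Bool × Option Bool satisfies, for all x, y, z ∈ Bool: the pushforward of {(some x, some y, none)} equals q_XY · π_XY{ω | ω.1 = x ∧ ω.2.1 = y}; the pushforward of {(some x, none, some z)} equals q_XZ · π_XZ{ω | ω.1 = x ∧ ω.2.2 = z}; and the pushforward of {(none, some y, some z)} equals q_YZ · π_YZ{ω | ω.2.1 = y ∧ ω.2.2 = z}. -/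

import Mathlib

open MeasureTheory

/-- The sample space: colours (`true` = Red, `false` = Blue) chosen by X, Y, Z. -/
abbrev SampleSpace : Type := Bool × Bool × Bool

/-- The three possible contexts: which pair of siblings attends the game. -/
inductive Ctx : Type
  | XY | XZ | YZ
deriving DecidableEq

instance : Fintype Ctx where
  elems := {Ctx.XY, Ctx.XZ, Ctx.YZ}
  complete := fun c => by cases c <;> simp

/-- The contextual σ-algebras `𝒜_c`: comaps under the respective projections of the
discrete σ-algebras on `Bool × Bool`. -/
def alg : Ctx → MeasurableSpace SampleSpace
  | Ctx.XY => MeasurableSpace.comap (fun ω : SampleSpace => (ω.1, ω.2.1)) ⊤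
  | Ctx.XZ => MeasurableSpace.comap (fun ω : SampleSpace => (ω.1, ω.2.2)) ⊤
  | Ctx.YZ => MeasurableSpace.comap (fun ω : SampleSpace => (ω.2.1, ω.2.2)) ⊤

/-- The augmented σ-algebra `𝒜^M` on the sample metaspace `Ω^M = Ω × C`:
a set `S` is measurable iff, for every context `c`, the slice `{ω | (ω, c) ∈ S}`
is `𝒜_c`-measurable. -/
def algM : MeasurableSpace (SampleSpace × Ctx) where
  MeasurableSet' S := ∀ c, MeasurableSet[alg c] {ω | (ω, c) ∈ S}
  measurableSet_empty := fun c => @MeasurableSet.empty _ (alg c)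
  measurableSet_compl := fun S hS c => (hS c).compl
  measurableSet_iUnion := fun f hf c => by
    have h : {ω | (ω, c) ∈ ⋃ i, f i} = ⋃ i, {ω | (ω, c) ∈ f i} := by
      ext ω; simp
    rw [h]
    exact MeasurableSet.iUnion fun i => hf i c

open scoped ENNReal NNReal

/-- `ξ^M(ω, c) = some ω.1` unless `c = YZ`, in which case it is `none`. -/
def xiM : SampleSpace × Ctx → Option Bool := fun p =>
  match p.2 with
  | Ctx.YZ => none
  | _ => some p.1.1

/-- `η^M(ω, c) = some ω.2.1` unless `c = XZ`, in which case it is `none`. -/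
def etaM : SampleSpace × Ctx → Option Bool := fun p =>
  match p.2 with
  | Ctx.XZ => none
  | _ => some p.1.2.1

/-- `ζ^M(ω, c) = some ω.2.2` unless `c = XY`, in which case it is `none`. -/
def zetaM : SampleSpace × Ctx → Option Bool := fun p =>
  match p.2 with
  | Ctx.XY => none
  | _ => some p.1.2.2

/-- The metaspace measure `Prb^M_q := ∑_{c ∈ C} q_c • (map ι_c π_c)` on `(Ω^M, 𝒜^M)`. -/
noncomputable def PrbM (π : (c : Ctx) → @Measure SampleSpace (alg c)) (q : Ctx → ℝ≥0) :
    @Measure (SampleSpace × Ctx) algM :=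
  ∑ c : Ctx, (q c : ℝ≥0∞) •
    @Measure.map SampleSpace (SampleSpace × Ctx) (alg c) algM (fun ω => (ω, c)) (π c)

lemma meas_iota (c : Ctx) : @Measurable _ _ (alg c) algM (fun ω => (ω, c)) :=
  fun _ hS => hS c

lemma meas_F : @Measurable _ _ algM ⊤ (fun p => (xiM p, etaM p, zetaM p)) := by
  intro s _
  intro c
  cases c with
  | XY =>
      refine ⟨(fun v : Bool × Bool => ((some v.1 : Option Bool), (some v.2 : Option Bool),
        (none : Option Bool))) ⁻¹' s, trivial, ?_⟩
      ext ω; simp [xiM, etaM, zetaM]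
  | XZ =>
      refine ⟨(fun v : Bool × Bool => ((some v.1 : Option Bool), (none : Option Bool),
        (some v.2 : Option Bool))) ⁻¹' s, trivial, ?_⟩
      ext ω; simp [xiM, etaM, zetaM]
  | YZ =>
      refine ⟨(fun v : Bool × Bool => ((none : Option Bool), (some v.1 : Option Bool),
        (some v.2 : Option Bool))) ⁻¹' s, trivial, ?_⟩
      ext ω; simp [xiM, etaM, zetaM]

lemma ctx_sum {M : Type*} [AddCommMonoid M] (f : Ctx → M) :
    ∑ c : Ctx, f c = f Ctx.XY + f Ctx.XZ + f Ctx.YZ := by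
  show f Ctx.XY + (f Ctx.XZ + (f Ctx.YZ + 0)) = _
  rw [add_zero, add_assoc]

/-- The pushforward of `Prb^M_q` under the consolidated measurable map `(ξ^M, η^M, ζ^M)`
(into `Option Bool × Option Bool × Option Bool` with the discrete σ-algebra) assigns to the
observable outcomes the probabilities `q_c · π_c(⋅)` of the corresponding contextual events. -/
theorem pushforward_PrbM
    (π : (c : Ctx) → @Measure SampleSpace (alg c))
    (hπ : ∀ c, @IsProbabilityMeasure SampleSpace (alg c) (π c))
    (q : Ctx → ℝ≥0) (hq : ∑ c : Ctx, q c = 1) :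
    ∀ x y z : Bool,
      (@Measure.map (SampleSpace × Ctx) (Option Bool × Option Bool × Option Bool) algM ⊤
          (fun p => (xiM p, etaM p, zetaM p)) (PrbM π q))
          {(some x, some y, none)}
        = (q Ctx.XY : ℝ≥0∞) * π Ctx.XY {ω : SampleSpace | ω.1 = x ∧ ω.2.1 = y} ∧
      (@Measure.map (SampleSpace × Ctx) (Option Bool × Option Bool × Option Bool) algM ⊤
          (fun p => (xiM p, etaM p, zetaM p)) (PrbM π q))
          {(some x, none, some z)}
        = (q Ctx.XZ : ℝ≥0∞) * π Ctx.XZ {ω : SampleSpace | ω.1 = x ∧ ω.2.2 = z} ∧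
      (@Measure.map (SampleSpace × Ctx) (Option Bool × Option Bool × Option Bool) algM ⊤
          (fun p => (xiM p, etaM p, zetaM p)) (PrbM π q))
          {(none, some y, some z)}
        = (q Ctx.YZ : ℝ≥0∞) * π Ctx.YZ {ω : SampleSpace | ω.2.1 = y ∧ ω.2.2 = z} := by
  intro x y z
  have hmap : ∀ (t : Set (Option Bool × Option Bool × Option Bool)),
      (@Measure.map (SampleSpace × Ctx) (Option Bool × Option Bool × Option Bool) algM ⊤
          (fun p => (xiM p, etaM p, zetaM p)) (PrbM π q)) t
        = ∑ c : Ctx, (q c : ℝ≥0∞) *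
            π c {ω | (xiM (ω, c), etaM (ω, c), zetaM (ω, c)) ∈ t} := by
    intro t
    rw [@Measure.map_apply _ _ algM ⊤ _ _ meas_F _ MeasurableSpace.measurableSet_top, PrbM,
      @Measure.finset_sum_apply _ _ algM]
    refine Finset.sum_congr rfl fun c _ => ?_
    rw [Measure.smul_apply, smul_eq_mul,
      @Measure.map_apply _ _ (alg c) algM _ _ (meas_iota c) _ (meas_F MeasurableSpace.measurableSet_top)]
    rfl
  refine ⟨?_, ?_, ?_⟩
  · rw [hmap, ctx_sum]
    have h1 : {ω : SampleSpace | (xiM (ω, Ctx.XY), etaM (ω, Ctx.XY), zetaM (ω, Ctx.XY)) ∈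
        ({(some x, some y, none)} : Set _)} = {ω : SampleSpace | ω.1 = x ∧ ω.2.1 = y} := by
      ext ω; simp [xiM, etaM, zetaM]
    have h2 : {ω : SampleSpace | (xiM (ω, Ctx.XZ), etaM (ω, Ctx.XZ), zetaM (ω, Ctx.XZ)) ∈
        ({(some x, some y, none)} : Set _)} = (∅ : Set SampleSpace) := by
      ext ω; simp [xiM, etaM, zetaM]
    have h3 : {ω : SampleSpace | (xiM (ω, Ctx.YZ), etaM (ω, Ctx.YZ), zetaM (ω, Ctx.YZ)) ∈
        ({(some x, some y, none)} : Set _)} = (∅ : Set SampleSpace) := by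
      ext ω; simp [xiM, etaM, zetaM]
    rw [h1, h2, h3]
    simp
  · rw [hmap, ctx_sum]
    have h1 : {ω : SampleSpace | (xiM (ω, Ctx.XY), etaM (ω, Ctx.XY), zetaM (ω, Ctx.XY)) ∈
        ({(some x, none, some z)} : Set _)} = (∅ : Set SampleSpace) := by
      ext ω; simp [xiM, etaM, zetaM]
    have h2 : {ω : SampleSpace | (xiM (ω, Ctx.XZ), etaM (ω, Ctx.XZ), zetaM (ω, Ctx.XZ)) ∈
        ({(some x, none, some z)} : Set _)} = {ω : SampleSpace | ω.1 = x ∧ ω.2.2 = z} := by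
      ext ω; simp [xiM, etaM, zetaM]
    have h3 : {ω : SampleSpace | (xiM (ω, Ctx.YZ), etaM (ω, Ctx.YZ), zetaM (ω, Ctx.YZ)) ∈
        ({(some x, none, some z)} : Set _)} = (∅ : Set SampleSpace) := by
      ext ω; simp [xiM, etaM, zetaM]
    rw [h1, h2, h3]
    simp
  · rw [hmap, ctx_sum]
    have h1 : {ω : SampleSpace | (xiM (ω, Ctx.XY), etaM (ω, Ctx.XY), zetaM (ω, Ctx.XY)) ∈
        ({(none, some y, some z)} : Set _)} = (∅ : Set SampleSpace) := by
      ext ω; simp [xiM, etaM, zetaM]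
    have h2 : {ω : SampleSpace | (xiM (ω, Ctx.XZ), etaM (ω, Ctx.XZ), zetaM (ω, Ctx.XZ)) ∈
        ({(none, some y, some z)} : Set _)} = (∅ : Set SampleSpace) := by
      ext ω; simp [xiM, etaM, zetaM]
    have h3 : {ω : SampleSpace | (xiM (ω, Ctx.YZ), etaM (ω, Ctx.YZ), zetaM (ω, Ctx.YZ)) ∈
        ({(none, some y, some z)} : Set _)} = {ω : SampleSpace | ω.2.1 = y ∧ ω.2.2 = z} := by
      ext ω; simp [xiM, etaM, zetaM]
    rw [h1, h2, h3]
    simp
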